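/- arXiv:2302.00245 — 4 statements merged into one kernel-verified Lean document; each statement's English description precedes it below -/
import Mathlib

section
/- For every step size h ∈ (0,1), every m ≥ 0, α, β ∈ ℝ and every pair (a,b) ∈ ℂ², there exists a unique pair (a',b') ∈ ℂ² satisfying a' − a = (i m h/2)(b' + b) + (i α h/2)(a' + a)|b|² + (i β h/2)(b' + b)·G(a,b) and b' − b = (i m h/2)(a' + a) + (i α h/2)(b' + b)|a|² + (i β h/2)(a' + a)·G(a,b); moreover any such pair satisfies the conservation identity |a'|² + |b'|² = |a|² + |b|². Consequently the QLB scheme is uniquely solvable at each time step and any solution satisfies |u^{k+1}_{n+1}|² + |v^{k+1}_{n−1}|² = |u^k_n|² + |v^k_n|² for all k ≥ 0 and n ∈ ℤ. -/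
open Complex

noncomputable section

/-- `G(u,v) = conj(u)·v + u·conj(v)`. -/
def Gc (u v : ℂ) : ℂ := (starRingEnd ℂ) u * v + u * (starRingEnd ℂ) v

/-- One step of the quantum lattice Boltzmann (QLB) scheme:
`a, b` are the values `u^k_n, v^k_n` and `a', b'` the values `u^{k+1}_{n+1}, v^{k+1}_{n-1}`. -/
def QLBStep (h m α β : ℝ) (a b a' b' : ℂ) : Prop :=
  a' - a = (Complex.I * (m : ℂ) * (h : ℂ) / 2) * (b' + b)
      + (Complex.I * (α : ℂ) * (h : ℂ) / 2) * (a' + a) * ((‖b‖ ^ 2 : ℝ) : ℂ)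
      + (Complex.I * (β : ℂ) * (h : ℂ) / 2) * (b' + b) * Gc a b
  ∧ b' - b = (Complex.I * (m : ℂ) * (h : ℂ) / 2) * (a' + a)
      + (Complex.I * (α : ℂ) * (h : ℂ) / 2) * (b' + b) * ((‖a‖ ^ 2 : ℝ) : ℂ)
      + (Complex.I * (β : ℂ) * (h : ℂ) / 2) * (a' + a) * Gc a b

/-- `(u, v)` is a solution of the QLB scheme. -/
def IsQLB (h m α β : ℝ) (u v : ℕ → ℤ → ℂ) : Prop :=
  ∀ (k : ℕ) (n : ℤ), QLBStep h m α β (u k n) (v k n) (u (k + 1) (n + 1)) (v (k + 1) (n - 1))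

/-!
Since `G(a, b) = 2 Re (conj a · b)` is real, one QLB step is the implicit midpoint rule
`z' - z = i P (z' + z)` for `z = (a, b)` and a real symmetric `2 × 2` matrix `P` whose entries
depend only on `z`. Hence `1 - i P` is invertible (its determinant has no common zero of real
and imaginary part), which gives unique solvability, and since `i P` is skew-Hermitian,
`‖z'‖² - ‖z‖² = Re ⟪z' + z, z' - z⟫ = Re ⟪z' + z, i P (z' + z)⟫ = 0`.
-/

lemma Gc_eq_ofReal_re (u v : ℂ) : Gc u v = ((2 * ((starRingEnd ℂ) u * v).re : ℝ) : ℂ) := by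
  have : u * (starRingEnd ℂ) v = (starRingEnd ℂ) ((starRingEnd ℂ) u * v) := by simp
  rw [Gc, this, Complex.add_conj, ofReal_mul, ofReal_ofNat]

/-- `z' - z = i P (z' + z)` for `z = (a, b)`, `z' = (a', b')` and `P = !![p, q; q, r]`. -/
def CrankNicolsonStep (p q r : ℝ) (a b a' b' : ℂ) : Prop :=
  a' - a = I * p * (a' + a) + I * q * (b' + b) ∧
  b' - b = I * q * (a' + a) + I * r * (b' + b)

namespace CrankNicolsonStep

variable {p q r : ℝ} {a b a' b' : ℂ}

theorem norm_sq_add_norm_sq_eq (hs : CrankNicolsonStep p q r a b a' b') :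
    ‖a'‖ ^ 2 + ‖b'‖ ^ 2 = ‖a‖ ^ 2 + ‖b‖ ^ 2 := by
  obtain ⟨e₁, e₂⟩ := hs
  have c₁ := congrArg (starRingEnd ℂ) e₁
  have c₂ := congrArg (starRingEnd ℂ) e₂
  simp only [map_sub, map_add, map_mul, conj_I, conj_ofReal] at c₁ c₂
  have key : ((normSq a' + normSq b' : ℝ) : ℂ) = (normSq a + normSq b : ℝ) := by
    push_cast
    rw [← mul_conj a', ← mul_conj b', ← mul_conj a, ← mul_conj b]
    linear_combination ((starRingEnd ℂ) a' + (starRingEnd ℂ) a) / 2 * e₁ + (a' + a) / 2 * c₁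
      + ((starRingEnd ℂ) b' + (starRingEnd ℂ) b) / 2 * e₂ + (b' + b) / 2 * c₂
  simpa only [Complex.sq_norm] using ofReal_injective key

end CrankNicolsonStep

def crankNicolsonDet (p q r : ℝ) : ℂ := (1 - I * p) * (1 - I * r) - I * q * (I * q)

theorem crankNicolsonDet_ne_zero (p q r : ℝ) : crankNicolsonDet p q r ≠ 0 := by
  intro hd
  have hre : 1 - p * r + q * q = 0 := by simpa [crankNicolsonDet] using congrArg re hd
  have him : -r + -p = 0 := by simpa [crankNicolsonDet] using congrArg im hd
  obtain rfl : r = -p := by linarith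
  nlinarith [sq_nonneg p, sq_nonneg q]

theorem existsUnique_crankNicolsonStep (p q r : ℝ) (a b : ℂ) :
    ∃! z : ℂ × ℂ, CrankNicolsonStep p q r a b z.1 z.2 := by
  have hd := crankNicolsonDet_ne_zero p q r
  -- Cramer's rule for `(1 - i P) z' = (1 + i P) z`.
  let rhs₁ : ℂ := (1 + I * p) * a + I * q * b
  let rhs₂ : ℂ := I * q * a + (1 + I * r) * b
  refine ⟨(((1 - I * r) * rhs₁ + I * q * rhs₂) / crankNicolsonDet p q r,
      ((1 - I * p) * rhs₂ + I * q * rhs₁) / crankNicolsonDet p q r), ?_, ?_⟩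
  · constructor <;> field_simp <;> simp only [crankNicolsonDet, rhs₁, rhs₂] <;> ring
  · rintro ⟨a', b'⟩ ⟨e₁, e₂⟩
    simp only [Prod.mk.injEq, eq_div_iff hd]
    unfold crankNicolsonDet
    constructor
    · linear_combination (1 - I * r) * e₁ + I * q * e₂
    · linear_combination (1 - I * p) * e₂ + I * q * e₁

theorem qlbStep_iff_crankNicolsonStep (h m α β : ℝ) (a b a' b' : ℂ) :
    QLBStep h m α β a b a' b' ↔
      CrankNicolsonStep (α * h / 2 * ‖b‖ ^ 2) (h / 2 * (m + β * (2 * ((starRingEnd ℂ) a * b).re)))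
        (α * h / 2 * ‖a‖ ^ 2) a b a' b' := by
  rw [QLBStep, CrankNicolsonStep, Gc_eq_ofReal_re]
  push_cast
  apply and_congr <;> apply Eq.congr_right <;> ring

theorem QLBStep.norm_sq_add_norm_sq_eq {h m α β : ℝ} {a b a' b' : ℂ}
    (hs : QLBStep h m α β a b a' b') : ‖a'‖ ^ 2 + ‖b'‖ ^ 2 = ‖a‖ ^ 2 + ‖b‖ ^ 2 :=
  ((qlbStep_iff_crankNicolsonStep h m α β a b a' b').1 hs).norm_sq_add_norm_sq_eq

theorem existsUnique_qlbStep (h m α β : ℝ) (a b : ℂ) :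
    ∃! z : ℂ × ℂ, QLBStep h m α β a b z.1 z.2 := by
  simpa only [qlbStep_iff_crankNicolsonStep] using existsUnique_crankNicolsonStep _ _ _ a b

theorem stmt0_general (h m α β : ℝ) :
    (∀ a b : ℂ,
      (∃! p : ℂ × ℂ, QLBStep h m α β a b p.1 p.2) ∧
      (∀ a' b' : ℂ, QLBStep h m α β a b a' b' →
        ‖a'‖ ^ 2 + ‖b'‖ ^ 2 = ‖a‖ ^ 2 + ‖b‖ ^ 2)) ∧
    (∀ u v : ℕ → ℤ → ℂ, IsQLB h m α β u v → ∀ (k : ℕ) (n : ℤ),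
      ‖u (k + 1) (n + 1)‖ ^ 2 + ‖v (k + 1) (n - 1)‖ ^ 2
        = ‖u k n‖ ^ 2 + ‖v k n‖ ^ 2) :=
  ⟨fun a b => ⟨existsUnique_qlbStep h m α β a b, fun _ _ => QLBStep.norm_sq_add_norm_sq_eq⟩,
    fun _ _ huv k n => (huv k n).norm_sq_add_norm_sq_eq⟩

/-- Unique solvability of the QLB scheme at each time step, and the conservation
identity `|u^{k+1}_{n+1}|² + |v^{k+1}_{n-1}|² = |u^k_n|² + |v^k_n|²`. -/
theorem stmt0 (h m α β : ℝ) (hh0 : 0 < h) (hh1 : h < 1) (hm : 0 ≤ m) :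
    (∀ a b : ℂ,
      (∃! p : ℂ × ℂ, QLBStep h m α β a b p.1 p.2) ∧
      (∀ a' b' : ℂ, QLBStep h m α β a b a' b' →
        ‖a'‖ ^ 2 + ‖b'‖ ^ 2 = ‖a‖ ^ 2 + ‖b‖ ^ 2)) ∧
    (∀ u v : ℕ → ℤ → ℂ, IsQLB h m α β u v → ∀ (k : ℕ) (n : ℤ),
      ‖u (k + 1) (n + 1)‖ ^ 2 + ‖v (k + 1) (n - 1)‖ ^ 2
        = ‖u k n‖ ^ 2 + ‖v k n‖ ^ 2) :=
  stmt0_general h m α β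

end
end

section
/- Let (u^k_n, v^k_n) be a solution of the QLB scheme with h > 0, and suppose that for a given k ≥ 0 and n ∈ ℤ one has (|u^k_n|² + |v^k_n|²)h ≤ 1/2 and 4|β|·(|u^k_n|² + |v^k_n|²)h ≤ 1. Then 0 ≤ e^k_n ≤ 8|u^k_n|²|v^k_n|² + 8m(|u^k_n|² + |v^k_n|²), and with C_β = 8m + 16|β|m + 16|β| there holds | |u^{k+1}_{n+1}|² − |u^k_n|² |/h ≤ C_β(|u^k_n|² + |v^k_n|²) + C_β|u^k_n|²|v^k_n|² and | |v^{k+1}_{n−1}|² − |v^k_n|² |/h ≤ C_β(|u^k_n|² + |v^k_n|²) + C_β|u^k_n|²|v^k_n|². -/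
open Complex

noncomputable section

/-
Each half of the scheme has the form `a' - a = I K (b' + b) + I c (a' + a)` with real `c` (from the
`α` term) and real coupling `K = h (m + β G(a, b)) / 2`, where `|K| ≤ h (m + 2|β||a||b|) / 2`
because `|G(a, b)| ≤ 2|a||b|`. Pairing with `conj (a' + a)` kills the `c` term:
`|a'|² - |a|² = -K Im((b' + b) conj (a' + a)) = -(|b'|² - |b|²)`. So the mass `s² = |a|² + |b|²`
is conserved and each increment is at most `|K| (|a'| + |a|)(|b'| + |b|)`. Solving for `a'` gives
`|a'| ≤ |a| + |K| (|b'| + |b|)`, which together with `|a'|, |b'| ≤ s` and `4|β| s² h ≤ 1` yields the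
a priori bound `|a'| ≤ 3/2 |a| + min(s, m h s)`; inserted into the increment bound, and with
`s² h ≤ 1/2`, it gives the estimates.
-/

open ComplexConjugate

theorem Gc_comm (a b : ℂ) : Gc a b = Gc b a := by
  unfold Gc; ring

theorem Gc_eq_re (a b : ℂ) : Gc a b = (Gc a b).re := by
  refine Complex.ext rfl ?_
  simp only [Gc, add_im, mul_im, conj_re, conj_im, ofReal_im]
  ring

theorem abs_Gc_re_le (a b : ℂ) : |(Gc a b).re| ≤ 2 * (‖a‖ * ‖b‖) := by
  have hre : (Gc a b).re = 2 * (conj a * b).re := by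
    simp only [Gc, add_re, mul_re, conj_re, conj_im]; ring
  calc |(Gc a b).re| = 2 * |(conj a * b).re| := by rw [hre, abs_mul, abs_two]
    _ ≤ 2 * ‖conj a * b‖ := by gcongr; exact abs_re_le_norm _
    _ = 2 * (‖a‖ * ‖b‖) := by rw [norm_mul, norm_conj]

def qlbCoupling (h m β : ℝ) (a b : ℂ) : ℝ := h * (m + β * (Gc a b).re) / 2

theorem qlbCoupling_comm (h m β : ℝ) (a b : ℂ) :
    qlbCoupling h m β a b = qlbCoupling h m β b a := by
  rw [qlbCoupling, qlbCoupling, Gc_comm]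

theorem abs_qlbCoupling_le {h m : ℝ} (hh : 0 ≤ h) (hm : 0 ≤ m) (β : ℝ) (a b : ℂ) :
    |qlbCoupling h m β a b| ≤ h * (m + 2 * |β| * (‖a‖ * ‖b‖)) / 2 := by
  have hG : |m + β * (Gc a b).re| ≤ m + 2 * |β| * (‖a‖ * ‖b‖) := by
    calc |m + β * (Gc a b).re| ≤ |m| + |β| * |(Gc a b).re| := by
          rw [← abs_mul]; exact abs_add_le _ _
      _ ≤ m + 2 * |β| * (‖a‖ * ‖b‖) := by
          rw [abs_of_nonneg hm, mul_assoc 2, mul_left_comm]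
          gcongr
          exact abs_Gc_re_le a b
  rw [qlbCoupling, abs_div, abs_mul, abs_of_nonneg hh, abs_two]
  gcongr

section SemiImplicit

variable {a a' w : ℂ} {K c : ℝ}

theorem norm_sq_sub_norm_sq_of_semiImplicit (hstep : a' - a = I * K * w + I * c * (a' + a)) :
    ‖a'‖ ^ 2 - ‖a‖ ^ 2 = -K * (w * conj (a' + a)).im := by
  have hre := congrArg re hstep
  have him := congrArg im hstep
  simp only [sub_re, sub_im, add_re, add_im, mul_re, mul_im, I_re, I_im, ofReal_re,
    ofReal_im] at hre him
  simp only [Complex.sq_norm, normSq_apply, mul_im, add_re, add_im, conj_re, conj_im]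
  linear_combination (a'.re + a.re) * hre + (a'.im + a.im) * him

theorem norm_le_of_semiImplicit (hstep : a' - a = I * K * w + I * c * (a' + a)) :
    ‖a'‖ ≤ ‖a‖ + |K| * ‖w‖ := by
  have hrearr : a' * conj (1 + I * c) = a * (1 + I * c) + I * K * w := by
    simp only [map_add, map_one, map_mul, conj_I, conj_ofReal]
    linear_combination hstep
  -- `1 + I c` and its conjugate have the same modulus, which is at least `1`
  have ht : 1 ≤ ‖1 + I * c‖ := by
    simpa using abs_re_le_norm (1 + I * c)
  have hmul : ‖1 + I * c‖ * ‖a'‖ ≤ ‖1 + I * c‖ * (‖a‖ + |K| * ‖w‖) := by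
    calc ‖1 + I * c‖ * ‖a'‖ = ‖a * (1 + I * c) + I * K * w‖ := by
          rw [← hrearr, norm_mul, norm_conj, mul_comm]
      _ ≤ ‖1 + I * c‖ * ‖a‖ + |K| * ‖w‖ := by
          refine (norm_add_le _ _).trans_eq ?_
          rw [norm_mul, norm_mul, norm_mul, norm_I, norm_real, Real.norm_eq_abs, one_mul, mul_comm]
      _ ≤ ‖1 + I * c‖ * (‖a‖ + |K| * ‖w‖) := by
          nlinarith [mul_nonneg (abs_nonneg K) (norm_nonneg w)]
  exact le_of_mul_le_mul_left hmul (by linarith)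

end SemiImplicit

section RealEstimates

variable {x y p q r s h m B D : ℝ}

theorem le_three_halves_add_min (hx : 0 ≤ x) (hy : 0 ≤ y) (hB : 0 ≤ B) (hh : 0 ≤ h)
    (hm : 0 ≤ m) (hys : y ≤ s) (hps : p ≤ s) (hqs : q ≤ s) (hsmall : 4 * B * (s ^ 2 * h) ≤ 1)
    (hp : p ≤ x + h * (m + 2 * B * (x * y)) / 2 * (q + y)) :
    p ≤ 3 / 2 * x + min s (m * h * s) := by
  have hcoef : 0 ≤ h * (m + 2 * B * (x * y)) / 2 := by positivity
  have hqy : h * (m + 2 * B * (x * y)) / 2 * (q + y) ≤ h * (m + 2 * B * (x * y)) / 2 * (2 * s) :=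
    mul_le_mul_of_nonneg_left (by linarith) hcoef
  -- the nonlinear part of the coupling moves `x` by at most `x / 2`
  have hnonlin : 2 * B * h * x * y * s ≤ x / 2 := by
    have : 2 * B * h * x * y * s ≤ 2 * B * h * x * s * s :=
      mul_le_mul_of_nonneg_right (mul_le_mul_of_nonneg_left hys (by positivity)) (by linarith)
    nlinarith
  rw [← min_add_add_left]
  exact le_min (by linarith) (by linarith)

theorem sq_min_le (hs : 0 ≤ s) (hh : 0 ≤ h) (hm : 0 ≤ m) (hsmall : s ^ 2 * h ≤ 1 / 2) :
    min s (m * h * s) ^ 2 ≤ m / 2 := by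
  have h0 : 0 ≤ min s (m * h * s) := le_min hs (by positivity)
  calc min s (m * h * s) ^ 2 ≤ s * (m * h * s) :=
        pow_two (min s (m * h * s)) ▸ mul_le_mul (min_le_left _ _) (min_le_right _ _) h0 hs
    _ = m * (s ^ 2 * h) := by ring
    _ ≤ m / 2 := by nlinarith

theorem sq_le_of_le_three_halves_add (hp : 0 ≤ p) (hpx : p ≤ 3 / 2 * x + r) :
    p ^ 2 ≤ 3 * x ^ 2 + 4 * r ^ 2 := by
  nlinarith [sq_nonneg (x / 2 - r)]

theorem energy_le_of_le_three_halves_add (hp0 : 0 ≤ p) (hq0 : 0 ≤ q)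
    (hp : p ≤ 3 / 2 * x + r) (hq : q ≤ 3 / 2 * y + r) (hr : r ^ 2 ≤ m / 2) :
    (p ^ 2 + x ^ 2) * y ^ 2 + (q ^ 2 + y ^ 2) * x ^ 2
      ≤ 8 * (x ^ 2 * y ^ 2) + 8 * m * (x ^ 2 + y ^ 2) := by
  have hp2 := sq_le_of_le_three_halves_add hp0 hp
  have hq2 := sq_le_of_le_three_halves_add hq0 hq
  nlinarith [mul_le_mul_of_nonneg_right hp2 (sq_nonneg y),
    mul_le_mul_of_nonneg_right hq2 (sq_nonneg x), sq_nonneg x, sq_nonneg y]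

theorem abs_div_le_of_le_coupling (hx : 0 ≤ x) (hy : 0 ≤ y) (hB : 0 ≤ B) (hh : 0 < h)
    (hm : 0 ≤ m) (hq0 : 0 ≤ q) (hr0 : 0 ≤ r) (hs : s ^ 2 = x ^ 2 + y ^ 2) (hrs : r ≤ s)
    (hrm : r ≤ m * h * s) (hsmall : 4 * B * (s ^ 2 * h) ≤ 1)
    (hp : p ≤ 3 / 2 * x + r) (hq : q ≤ 3 / 2 * y + r)
    (hD : |D| ≤ h * (m + 2 * B * (x * y)) / 2 * ((p + x) * (q + y))) :
    |D| / h ≤ (8 * m + 16 * B * m + 16 * B) * (x ^ 2 + y ^ 2)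
      + (8 * m + 16 * B * m + 16 * B) * (x ^ 2 * y ^ 2) := by
  have hs0 : 0 ≤ s := hr0.trans hrs
  have hxs : x ≤ s := by nlinarith
  have hys : y ≤ s := by nlinarith
  have hxy : x * y ≤ s ^ 2 / 2 := by nlinarith [sq_nonneg (x - y)]
  have hprod : (p + x) * (q + y) ≤ (5 / 2 * x + r) * (5 / 2 * y + r) :=
    mul_le_mul (by linarith) (by linarith) (by positivity) (by positivity)
  have hlin : (5 / 2 * x + r) * (5 / 2 * y + r) ≤ 49 / 4 * s ^ 2 := by
    nlinarith [mul_le_mul (by linarith : 5 / 2 * x + r ≤ 7 / 2 * s)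
      (by linarith : 5 / 2 * y + r ≤ 7 / 2 * s) (by positivity) (by linarith)]
  -- only the part of the product involving `r` needs the smallness of `B * s ^ 2 * h`
  have hcross : B * (x * y) * (r * (5 / 2 * (x + y) + r)) ≤ 3 / 4 * m * s ^ 2 := by
    have h1 : r * (5 / 2 * (x + y) + r) ≤ m * h * s * (6 * s) :=
      mul_le_mul hrm (by linarith) (by positivity) (by positivity)
    have h2 : B * (x * y) * (r * (5 / 2 * (x + y) + r)) ≤ B * (s ^ 2 / 2) * (m * h * s * (6 * s)) :=
      mul_le_mul (mul_le_mul_of_nonneg_left hxy hB) h1 (by positivity) (by positivity)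
    nlinarith [mul_nonneg hm (sq_nonneg s)]
  have hsharp : |D| ≤ h * (55 / 8 * m * s ^ 2 + 25 / 4 * B * (x ^ 2 * y ^ 2)) := by
    calc |D| ≤ h * (m + 2 * B * (x * y)) / 2 * ((5 / 2 * x + r) * (5 / 2 * y + r)) :=
          hD.trans (mul_le_mul_of_nonneg_left hprod (by positivity))
      _ = h * (m / 2 * ((5 / 2 * x + r) * (5 / 2 * y + r)) + 25 / 4 * B * (x ^ 2 * y ^ 2)
            + B * (x * y) * (r * (5 / 2 * (x + y) + r))) := by ring
      _ ≤ h * (55 / 8 * m * s ^ 2 + 25 / 4 * B * (x ^ 2 * y ^ 2)) := by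
          refine mul_le_mul_of_nonneg_left ?_ hh.le
          nlinarith [mul_le_mul_of_nonneg_left hlin (by positivity : 0 ≤ m / 2)]
  have hC : 55 / 8 * m * s ^ 2 + 25 / 4 * B * (x ^ 2 * y ^ 2)
      ≤ (8 * m + 16 * B * m + 16 * B) * (x ^ 2 + y ^ 2)
        + (8 * m + 16 * B * m + 16 * B) * (x ^ 2 * y ^ 2) := by
    have hS : 0 ≤ x ^ 2 + y ^ 2 := by positivity
    have hT : 0 ≤ x ^ 2 * y ^ 2 := by positivity
    rw [hs]
    nlinarith [mul_nonneg hm hS, mul_nonneg hB hS, mul_nonneg (mul_nonneg hB hm) hS,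
      mul_nonneg hm hT, mul_nonneg hB hT, mul_nonneg (mul_nonneg hB hm) hT]
  rw [div_le_iff₀ hh, mul_comm _ h]
  exact hsharp.trans (mul_le_mul_of_nonneg_left hC hh.le)

end RealEstimates

namespace QLBStep

variable {h m α β : ℝ} {a b a' b' : ℂ}

theorem swap (hs : QLBStep h m α β a b a' b') : QLBStep h m α β b a b' a' := by
  rw [QLBStep, Gc_comm]
  exact ⟨hs.2, hs.1⟩

theorem semiImplicit (hs : QLBStep h m α β a b a' b') :
    a' - a = I * qlbCoupling h m β a b * (b' + b) + I * (α * h * ‖b‖ ^ 2 / 2 : ℝ) * (a' + a) := by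
  have h1 := hs.1
  rw [Gc_eq_re] at h1
  rw [qlbCoupling]
  push_cast at h1 ⊢
  linear_combination h1

theorem norm_sq_add_norm_sq (hs : QLBStep h m α β a b a' b') :
    ‖a'‖ ^ 2 + ‖b'‖ ^ 2 = ‖a‖ ^ 2 + ‖b‖ ^ 2 := by
  have ha := norm_sq_sub_norm_sq_of_semiImplicit hs.semiImplicit
  have hb := norm_sq_sub_norm_sq_of_semiImplicit hs.swap.semiImplicit
  -- the two energy fluxes are imaginary parts of complex conjugate numbers
  have hflip : ((a' + a) * conj (b' + b)).im = -((b' + b) * conj (a' + a)).im := by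
    rw [← conj_im, map_mul, conj_conj, mul_comm]
  rw [qlbCoupling_comm, hflip] at hb
  linarith

theorem abs_norm_sq_sub_le (hs : QLBStep h m α β a b a' b') (hh : 0 ≤ h) (hm : 0 ≤ m) :
    |‖a'‖ ^ 2 - ‖a‖ ^ 2|
      ≤ h * (m + 2 * |β| * (‖a‖ * ‖b‖)) / 2 * ((‖a'‖ + ‖a‖) * (‖b'‖ + ‖b‖)) := by
  rw [norm_sq_sub_norm_sq_of_semiImplicit hs.semiImplicit, abs_mul, abs_neg]
  refine mul_le_mul (abs_qlbCoupling_le hh hm β a b) ?_ (abs_nonneg _) (by positivity)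
  calc |((b' + b) * conj (a' + a)).im| ≤ ‖b' + b‖ * ‖a' + a‖ := by
        simpa only [norm_mul, norm_conj] using abs_im_le_norm ((b' + b) * conj (a' + a))
    _ ≤ (‖a'‖ + ‖a‖) * (‖b'‖ + ‖b‖) := by
        rw [mul_comm]; gcongr <;> exact norm_add_le _ _

theorem norm_le (hs : QLBStep h m α β a b a' b') (hh : 0 ≤ h) (hm : 0 ≤ m) :
    ‖a'‖ ≤ ‖a‖ + h * (m + 2 * |β| * (‖a‖ * ‖b‖)) / 2 * (‖b'‖ + ‖b‖) :=
  (norm_le_of_semiImplicit hs.semiImplicit).trans <| by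
    gcongr
    · exact abs_qlbCoupling_le hh hm β a b
    · exact norm_add_le _ _

theorem norm_le_three_halves_add_min (hs : QLBStep h m α β a b a' b') (hh : 0 ≤ h) (hm : 0 ≤ m)
    {s : ℝ} (hs0 : 0 ≤ s) (hs2 : s ^ 2 = ‖a‖ ^ 2 + ‖b‖ ^ 2)
    (hsmall : 4 * |β| * (s ^ 2 * h) ≤ 1) :
    ‖a'‖ ≤ 3 / 2 * ‖a‖ + min s (m * h * s) := by
  have hmass := hs.norm_sq_add_norm_sq
  have hbs : ‖b‖ ≤ s := by nlinarith [norm_nonneg a, norm_nonneg b]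
  have ha's : ‖a'‖ ≤ s := by nlinarith [norm_nonneg a', norm_nonneg b']
  have hb's : ‖b'‖ ≤ s := by nlinarith [norm_nonneg a', norm_nonneg b']
  exact le_three_halves_add_min (norm_nonneg a) (norm_nonneg b) (abs_nonneg β) hh hm hbs ha's
    hb's hsmall (hs.norm_le hh hm)

end QLBStep

/-- Local evolution estimates under the smallness condition
`(|u^k_n|² + |v^k_n|²)h ≤ min{1/(4|β|), 1/2}`, with `C_β = 8m + 16|β|m + 16|β|`. -/
theorem stmt6 (h m α β : ℝ) (hh0 : 0 < h) (hm : 0 ≤ m)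
    (u v : ℕ → ℤ → ℂ) (huv : IsQLB h m α β u v) (k : ℕ) (n : ℤ)
    (hsmall1 : (‖u k n‖ ^ 2 + ‖v k n‖ ^ 2) * h ≤ 1 / 2)
    (hsmall2 : 4 * |β| * ((‖u k n‖ ^ 2 + ‖v k n‖ ^ 2) * h) ≤ 1) :
    let e : ℝ := (‖u (k + 1) (n + 1)‖ ^ 2 + ‖u k n‖ ^ 2) *
        ‖v k n‖ ^ 2
      + (‖v (k + 1) (n - 1)‖ ^ 2 + ‖v k n‖ ^ 2) *
        ‖u k n‖ ^ 2
    let Cβ : ℝ := 8 * m + 16 * |β| * m + 16 * |β|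
    (0 ≤ e ∧
      e ≤ 8 * (‖u k n‖ ^ 2 * ‖v k n‖ ^ 2)
        + 8 * m * (‖u k n‖ ^ 2 + ‖v k n‖ ^ 2)) ∧
    |‖u (k + 1) (n + 1)‖ ^ 2 - ‖u k n‖ ^ 2| / h
      ≤ Cβ * (‖u k n‖ ^ 2 + ‖v k n‖ ^ 2)
        + Cβ * (‖u k n‖ ^ 2 * ‖v k n‖ ^ 2) ∧
    |‖v (k + 1) (n - 1)‖ ^ 2 - ‖v k n‖ ^ 2| / h
      ≤ Cβ * (‖u k n‖ ^ 2 + ‖v k n‖ ^ 2)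
        + Cβ * (‖u k n‖ ^ 2 * ‖v k n‖ ^ 2) := by
  intro e Cβ
  have hs := huv k n
  obtain ⟨s, hs0, hs2⟩ : ∃ s : ℝ, 0 ≤ s ∧ s ^ 2 = ‖u k n‖ ^ 2 + ‖v k n‖ ^ 2 :=
    ⟨_, Real.sqrt_nonneg _, Real.sq_sqrt (by positivity)⟩
  have hs2' : s ^ 2 = ‖v k n‖ ^ 2 + ‖u k n‖ ^ 2 := by rw [hs2, add_comm]
  rw [← hs2] at hsmall1 hsmall2
  have hp := hs.norm_le_three_halves_add_min hh0.le hm hs0 hs2 hsmall2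
  have hq := hs.swap.norm_le_three_halves_add_min hh0.le hm hs0 hs2' hsmall2
  have hr0 : 0 ≤ min s (m * h * s) := le_min hs0 (by positivity)
  refine ⟨⟨by positivity, energy_le_of_le_three_halves_add (norm_nonneg _) (norm_nonneg _) hp hq
    (sq_min_le hs0 hh0.le hm hsmall1)⟩, ?_, ?_⟩
  · exact abs_div_le_of_le_coupling (norm_nonneg _) (norm_nonneg _) (abs_nonneg β) hh0 hm
      (norm_nonneg _) hr0 hs2 (min_le_left _ _) (min_le_right _ _) hsmall2 hp hq
      (hs.abs_norm_sq_sub_le hh0.le hm)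
  · have hb := abs_div_le_of_le_coupling (norm_nonneg _) (norm_nonneg _) (abs_nonneg β) hh0 hm
      (norm_nonneg _) hr0 hs2' (min_le_left _ _) (min_le_right _ _) hsmall2 hq hp
      (hs.swap.abs_norm_sq_sub_le hh0.le hm)
    rwa [add_comm (‖v k n‖ ^ 2), mul_comm (‖v k n‖ ^ 2)] at hb

end
end

section
/- For every h ∈ (0,1) the inhomogeneous QLB scheme is uniquely solvable at each time step: given (ũ^k_n, ṽ^k_n) ∈ ℂ² and the sources g^{k,1}_n, g^{k,2}_n ∈ ℂ, there exists a unique pair (ũ^{k+1}_{n+1}, ṽ^{k+1}_{n−1}) ∈ ℂ² satisfying the two scheme equations. Moreover, any solution satisfies for all k ≥ 0 and n ∈ ℤ: | |ũ^{k+1}_{n+1}|² − |ũ^k_n|² |/h ≤ (8m+2)(|ũ^{k+1}_{n+1}|² + |ṽ^{k+1}_{n−1}|² + |ũ^k_n|² + |ṽ^k_n|²) + |β|·ẽ^k_n + |g^k_n|², and | |ṽ^{k+1}_{n−1}|² − |ṽ^k_n|² |/h ≤ (8m+2)(|ũ^{k+1}_{n+1}|² + |ṽ^{k+1}_{n−1}|²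 + |ũ^k_n|² + |ṽ^k_n|²) + |β|·ẽ^k_n + |g^k_n|², where ẽ^k_n = (|ũ^{k+1}_{n+1}|² + |ũ^k_n|²)|ṽ^k_n|² + (|ṽ^{k+1}_{n−1}|² + |ṽ^k_n|²)|ũ^k_n|². -/
open Complex

noncomputable section

/-- One step of the inhomogeneous QLB scheme with sources `g1, g2`. -/
def QLBStepInhom (h m α β : ℝ) (g1 g2 : ℂ) (a b a' b' : ℂ) : Prop :=
  (a' - a) / (h : ℂ) = (Complex.I * (m : ℂ) / 2) * (b' + b)
      + (Complex.I * (α : ℂ) / 2) * (a' + a) * ((‖b‖ ^ 2 : ℝ) : ℂ)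
      + (Complex.I * (β : ℂ) / 2) * (b' + b) * Gc a b + g1
  ∧ (b' - b) / (h : ℂ) = (Complex.I * (m : ℂ) / 2) * (a' + a)
      + (Complex.I * (α : ℂ) / 2) * (b' + b) * ((‖a‖ ^ 2 : ℝ) : ℂ)
      + (Complex.I * (β : ℂ) / 2) * (a' + a) * Gc a b + g2

/-- `(u, v)` is a solution of the inhomogeneous QLB scheme with sources `g1, g2`. -/
def IsQLBInhom (h m α β : ℝ) (g1 g2 : ℕ → ℤ → ℂ) (u v : ℕ → ℤ → ℂ) : Prop :=
  ∀ (k : ℕ) (n : ℤ), QLBStepInhom h m α β (g1 k n) (g2 k n)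
    (u k n) (v k n) (u (k + 1) (n + 1)) (v (k + 1) (n - 1))

/-!
The step is a 2×2 linear system for `(ũ^{k+1}_{n+1}, ṽ^{k+1}_{n−1})` whose matrix is `1 − i·H` with
`H` real symmetric (the nonlinear terms only involve the old values, and `G` is real), so it is
invertible. For the estimate, `|x|² − |a|² = Re((x − a)·conj(x + a))`; the `α`-term is `i·(real)·(x + a)`
and drops out of this real part, and what remains is bounded by Cauchy–Schwarz and AM–GM.
-/

open ComplexConjugate

theorem existsUnique_of_det_ne_zero {K : Type*} [Field K] {a b c d : K} (hdet : a * d - b * c ≠ 0)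
    (e f : K) : ∃! p : K × K, a * p.1 + b * p.2 = e ∧ c * p.1 + d * p.2 = f := by
  refine ⟨((d * e - b * f) / (a * d - b * c), (a * f - c * e) / (a * d - b * c)), ⟨?_, ?_⟩, ?_⟩
  · rw [mul_div_assoc', mul_div_assoc', ← add_div, div_eq_iff hdet]
    ring
  · rw [mul_div_assoc', mul_div_assoc', ← add_div, div_eq_iff hdet]
    ring
  · rintro ⟨x, y⟩ ⟨he, hf⟩
    ext
    · rw [eq_div_iff hdet]
      linear_combination d * he - b * hf
    · rw [eq_div_iff hdet]
      linear_combination a * hf - c * he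

theorem det_one_sub_I_mul_ne_zero (r₁ r₂ s : ℝ) :
    (1 - I * r₁) * (1 - I * r₂) - (-(I * s)) * (-(I * s)) ≠ 0 := by
  intro hdet
  have hre := congrArg Complex.re hdet
  have him := congrArg Complex.im hdet
  simp only [mul_re, mul_im, sub_re, sub_im, neg_re, neg_im, one_re, one_im, I_re, I_im,
    ofReal_re, ofReal_im, zero_re, zero_im] at hre him
  have hr₂ : r₂ = -r₁ := by linarith
  subst hr₂
  nlinarith [sq_nonneg r₁, sq_nonneg s]

theorem Gc_eq_ofReal (a b : ℂ) : Gc a b = ((2 * (conj a * b).re : ℝ) : ℂ) := by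
  rw [← add_conj, Gc, map_mul, conj_conj, mul_comm a]

theorem abs_two_mul_re_conj_mul_le (a b : ℂ) : |2 * (conj a * b).re| ≤ 2 * ‖a‖ * ‖b‖ := by
  rw [abs_mul, abs_two, mul_assoc]
  gcongr
  exact (abs_re_le_norm _).trans_eq (by rw [norm_mul, norm_conj])

theorem qlbStepInhom_iff {h : ℝ} (hh : h ≠ 0) (m α β : ℝ) (g₁ g₂ a b x y : ℂ) :
    QLBStepInhom h m α β g₁ g₂ a b x y ↔
      (1 - I * ((α * h * ‖b‖ ^ 2 / 2 : ℝ) : ℂ)) * x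
          + -(I * ((h * (m + β * (2 * (conj a * b).re)) / 2 : ℝ) : ℂ)) * y
        = (1 + I * ((α * h * ‖b‖ ^ 2 / 2 : ℝ) : ℂ)) * a
          + I * ((h * (m + β * (2 * (conj a * b).re)) / 2 : ℝ) : ℂ) * b + h * g₁
      ∧ -(I * ((h * (m + β * (2 * (conj a * b).re)) / 2 : ℝ) : ℂ)) * x
          + (1 - I * ((α * h * ‖a‖ ^ 2 / 2 : ℝ) : ℂ)) * y
        = (1 + I * ((α * h * ‖a‖ ^ 2 / 2 : ℝ) : ℂ)) * b
          + I * ((h * (m + β * (2 * (conj a * b).re)) / 2 : ℝ) : ℂ) * a + h * g₂ := by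
  have hhc : (h : ℂ) ≠ 0 := by exact_mod_cast hh
  rw [QLBStepInhom, div_eq_iff hhc, div_eq_iff hhc, Gc_eq_ofReal]
  refine and_congr ⟨fun e => ?_, fun e => ?_⟩ ⟨fun e => ?_, fun e => ?_⟩ <;>
    linear_combination (norm := (push_cast; ring)) e

theorem qlbStepInhom_existsUnique {h : ℝ} (hh : h ≠ 0) (m α β : ℝ) (a b g₁ g₂ : ℂ) :
    ∃! p : ℂ × ℂ, QLBStepInhom h m α β g₁ g₂ a b p.1 p.2 := by
  simp only [qlbStepInhom_iff hh]
  exact existsUnique_of_det_ne_zero (det_one_sub_I_mul_ne_zero _ _ _) _ _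

theorem sq_norm_sub_sq_norm_eq_re (x a : ℂ) :
    ‖x‖ ^ 2 - ‖a‖ ^ 2 = ((x - a) * conj (x + a)).re := by
  simp only [Complex.sq_norm, normSq_apply, mul_re, sub_re, sub_im, conj_re, conj_im, add_re, add_im]
  ring

theorem abs_sq_norm_sub_sq_norm_le {h c d : ℝ} (hh : 0 ≤ h) {x a w g : ℂ}
    (heq : x - a = h * (I * c * w + I * d * (x + a) + g)) :
    |‖x‖ ^ 2 - ‖a‖ ^ 2| ≤ h * ((|c| * ‖w‖ + ‖g‖) * ‖x + a‖) := by
  -- `I * d * (x + a) * conj (x + a) = I * (d * |x + a|²)` is purely imaginary.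
  have hdrop : ((x - a) * conj (x + a)).re = (h * ((I * c * w + g) * conj (x + a))).re := by
    rw [heq, show (h : ℂ) * (I * c * w + I * d * (x + a) + g) * conj (x + a)
        = h * ((I * c * w + g) * conj (x + a)) + I * (h * d) * ((x + a) * conj (x + a)) by ring,
      mul_conj, add_re, add_eq_left]
    simp
  rw [sq_norm_sub_sq_norm_eq_re, hdrop]
  refine (abs_re_le_norm _).trans ?_
  rw [norm_mul, norm_mul, norm_conj, norm_real, Real.norm_of_nonneg hh]
  gcongr
  refine (norm_add_le _ _).trans_eq ?_
  rw [norm_mul, norm_mul, norm_I, norm_real, Real.norm_eq_abs, one_mul]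

theorem qlb_energy_bound {m β X Y A B U V g : ℝ} (hm : 0 ≤ m) (hX : 0 ≤ X)
    (hA : 0 ≤ A) (hB : 0 ≤ B) (hV : 0 ≤ V) (hg : 0 ≤ g)
    (hUXA : U ≤ X + A) (hVYB : V ≤ Y + B) :
    ((m / 2 + |β| * A * B) * V + g) * U
      ≤ (8 * m + 2) * (X ^ 2 + Y ^ 2 + A ^ 2 + B ^ 2)
        + |β| * ((X ^ 2 + A ^ 2) * B ^ 2 + (Y ^ 2 + B ^ 2) * A ^ 2) + g ^ 2 := by
  have hUV : U * V ≤ (X + A) * (Y + B) := mul_le_mul hUXA hVYB hV (by positivity)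
  have hmass : (X + A) * (Y + B) ≤ X ^ 2 + Y ^ 2 + A ^ 2 + B ^ 2 := by
    nlinarith [sq_nonneg (X + A - (Y + B)), sq_nonneg (X - A), sq_nonneg (Y - B)]
  have hcoupling : A * B * ((X + A) * (Y + B))
      ≤ (X ^ 2 + A ^ 2) * B ^ 2 + (Y ^ 2 + B ^ 2) * A ^ 2 := by
    nlinarith [sq_nonneg (X * B - Y * A), sq_nonneg (X * B - A * B), sq_nonneg (A * B - A * Y)]
  have hsource : g * U ≤ g ^ 2 + (X ^ 2 + A ^ 2) / 2 := by
    nlinarith [mul_le_mul_of_nonneg_left hUXA hg, sq_nonneg (g - X), sq_nonneg (g - A)]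
  have hβ : |β| * (A * B * (U * V)) ≤ |β| * ((X ^ 2 + A ^ 2) * B ^ 2 + (Y ^ 2 + B ^ 2) * A ^ 2) := by
    gcongr
    exact (mul_le_mul_of_nonneg_left hUV (by positivity)).trans hcoupling
  have hmUV : m / 2 * (U * V) ≤ m / 2 * (X ^ 2 + Y ^ 2 + A ^ 2 + B ^ 2) := by
    gcongr
    exact hUV.trans hmass
  nlinarith [mul_nonneg hm (by positivity : (0 : ℝ) ≤ X ^ 2 + Y ^ 2 + A ^ 2 + B ^ 2)]

theorem abs_sq_norm_sub_sq_norm_div_le {h : ℝ} (hh : 0 < h) {m : ℝ} (hm : 0 ≤ m) (α β : ℝ)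
    {a b x y g : ℂ}
    (heq : (x - a) / (h : ℂ) = (I * (m : ℂ) / 2) * (y + b)
      + (I * (α : ℂ) / 2) * (x + a) * ((‖b‖ ^ 2 : ℝ) : ℂ)
      + (I * (β : ℂ) / 2) * (y + b) * Gc a b + g) :
    |‖x‖ ^ 2 - ‖a‖ ^ 2| / h
      ≤ (8 * m + 2) * (‖x‖ ^ 2 + ‖y‖ ^ 2 + ‖a‖ ^ 2 + ‖b‖ ^ 2)
        + |β| * ((‖x‖ ^ 2 + ‖a‖ ^ 2) * ‖b‖ ^ 2 + (‖y‖ ^ 2 + ‖b‖ ^ 2) * ‖a‖ ^ 2)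
        + ‖g‖ ^ 2 := by
  have hhc : (h : ℂ) ≠ 0 := by exact_mod_cast hh.ne'
  have hstep : x - a = h * (I * ((m + β * (2 * (conj a * b).re)) / 2 : ℝ) * (y + b)
      + I * (α * ‖b‖ ^ 2 / 2 : ℝ) * (x + a) + g) := by
    rw [div_eq_iff hhc, Gc_eq_ofReal] at heq
    rw [heq]
    push_cast
    ring
  have hc : |(m + β * (2 * (conj a * b).re)) / 2| ≤ m / 2 + |β| * ‖a‖ * ‖b‖ := by
    have hG := abs_two_mul_re_conj_mul_le a b
    rw [abs_div, abs_two, div_le_iff₀ two_pos]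
    calc |m + β * (2 * (conj a * b).re)| ≤ |m| + |β| * |2 * (conj a * b).re| := by
          rw [← abs_mul]; exact abs_add_le _ _
      _ ≤ m + |β| * (2 * ‖a‖ * ‖b‖) := by
          rw [abs_of_nonneg hm]; gcongr
      _ = _ := by ring
  rw [div_le_iff₀ hh, mul_comm _ h]
  refine (abs_sq_norm_sub_sq_norm_le hh.le hstep).trans ?_
  gcongr h * ?_
  calc (|(m + β * (2 * (conj a * b).re)) / 2| * ‖y + b‖ + ‖g‖) * ‖x + a‖
      ≤ ((m / 2 + |β| * ‖a‖ * ‖b‖) * ‖y + b‖ + ‖g‖) * ‖x + a‖ := by gcongr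
    _ ≤ _ := qlb_energy_bound hm (norm_nonneg x) (norm_nonneg a) (norm_nonneg b)
        (norm_nonneg _) (norm_nonneg g) (norm_add_le x a) (norm_add_le y b)

theorem stmt7_general (h m α β : ℝ) (hh0 : 0 < h) (hm : 0 ≤ m) :
    (∀ a b g1 g2 : ℂ, ∃! p : ℂ × ℂ, QLBStepInhom h m α β g1 g2 a b p.1 p.2) ∧
    (∀ g1 g2 u v : ℕ → ℤ → ℂ, IsQLBInhom h m α β g1 g2 u v →
      ∀ (k : ℕ) (n : ℤ),
        let et : ℝ := (‖u (k + 1) (n + 1)‖ ^ 2 + ‖u k n‖ ^ 2) *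
            ‖v k n‖ ^ 2
          + (‖v (k + 1) (n - 1)‖ ^ 2 + ‖v k n‖ ^ 2) *
            ‖u k n‖ ^ 2
        let gsq : ℝ := ‖g1 k n‖ ^ 2 + ‖g2 k n‖ ^ 2
        |‖u (k + 1) (n + 1)‖ ^ 2 - ‖u k n‖ ^ 2| / h
          ≤ (8 * m + 2) * (‖u (k + 1) (n + 1)‖ ^ 2
              + ‖v (k + 1) (n - 1)‖ ^ 2
              + ‖u k n‖ ^ 2 + ‖v k n‖ ^ 2)
            + |β| * et + gsq ∧
        |‖v (k + 1) (n - 1)‖ ^ 2 - ‖v k n‖ ^ 2| / h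
          ≤ (8 * m + 2) * (‖u (k + 1) (n + 1)‖ ^ 2
              + ‖v (k + 1) (n - 1)‖ ^ 2
              + ‖u k n‖ ^ 2 + ‖v k n‖ ^ 2)
            + |β| * et + gsq) := by
  refine ⟨fun a b g1 g2 => qlbStepInhom_existsUnique hh0.ne' m α β a b g1 g2,
    fun g1 g2 u v huv k n => ?_⟩
  obtain ⟨hu, hv⟩ := huv k n
  rw [Gc_comm] at hv
  have hu' := abs_sq_norm_sub_sq_norm_div_le hh0 hm α β hu
  have hv' := abs_sq_norm_sub_sq_norm_div_le hh0 hm α β hv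
  constructor
  · linarith [sq_nonneg ‖g2 k n‖]
  · linarith [sq_nonneg ‖g1 k n‖]

/-- Unique solvability of the inhomogeneous QLB scheme at each time step, and
the evolution estimates for any of its solutions. -/
theorem stmt7 (h m α β : ℝ) (hh0 : 0 < h) (hh1 : h < 1) (hm : 0 ≤ m) :
    (∀ a b g1 g2 : ℂ, ∃! p : ℂ × ℂ, QLBStepInhom h m α β g1 g2 a b p.1 p.2) ∧
    (∀ g1 g2 u v : ℕ → ℤ → ℂ, IsQLBInhom h m α β g1 g2 u v →
      ∀ (k : ℕ) (n : ℤ),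
        let et : ℝ := (‖u (k + 1) (n + 1)‖ ^ 2 + ‖u k n‖ ^ 2) *
            ‖v k n‖ ^ 2
          + (‖v (k + 1) (n - 1)‖ ^ 2 + ‖v k n‖ ^ 2) *
            ‖u k n‖ ^ 2
        let gsq : ℝ := ‖g1 k n‖ ^ 2 + ‖g2 k n‖ ^ 2
        |‖u (k + 1) (n + 1)‖ ^ 2 - ‖u k n‖ ^ 2| / h
          ≤ (8 * m + 2) * (‖u (k + 1) (n + 1)‖ ^ 2
              + ‖v (k + 1) (n - 1)‖ ^ 2
              + ‖u k n‖ ^ 2 + ‖v k n‖ ^ 2)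
            + |β| * et + gsq ∧
        |‖v (k + 1) (n - 1)‖ ^ 2 - ‖v k n‖ ^ 2| / h
          ≤ (8 * m + 2) * (‖u (k + 1) (n + 1)‖ ^ 2
              + ‖v (k + 1) (n - 1)‖ ^ 2
              + ‖u k n‖ ^ 2 + ‖v k n‖ ^ 2)
            + |β| * et + gsq) :=
  stmt7_general h m α β hh0 hm

end
end

section
/- Let a^k_n, b^k_n, c^k_n, d^k_n ≥ 0 (k ∈ ℕ, n ∈ ℤ) be nonnegative reals satisfying a^{k+1}_{n+1} ≤ a^k_n + c^k_n and b^{k+1}_{n−1} ≤ b^k_n + d^k_n for all k ≥ 0 and n ∈ ℤ. Fix n₀ ∈ ℤ and k₀ ∈ ℕ, and for 0 ≤ k ≤ k₀ define Q(k) = ∑_{n₀−k₀+k ≤ n ≤ l ≤ n₀+k₀−k} a^k_n·b^k_l, D(k) = ∑_{n₀−k₀+k ≤ n ≤ n₀+k₀−k} a^k_n·b^k_n, and let L^a(k), L^b(k), L^c(k), L^d(k) denote the sums of a^k_n, b^k_n, c^k_n, d^k_n respectively over n₀−k₀+k ≤ n ≤ n₀+k₀−k. Then for every 1 ≤ k ≤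 k₀: Q(k) − Q(k−1) + D(k−1) ≤ L^a(k−1)·L^d(k−1) + L^b(k−1)·L^c(k−1) + L^c(k−1)·L^d(k−1). -/
noncomputable section

/-- The Bony-type functional `Q(k) = ∑_{n₀−k₀+k ≤ n ≤ l ≤ n₀+k₀−k} a^k_n b^k_l`. -/
def Qfun (a b : ℕ → ℤ → ℝ) (n₀ : ℤ) (k₀ k : ℕ) : ℝ :=
  ∑ n ∈ Finset.Icc (n₀ - (k₀ : ℤ) + (k : ℤ)) (n₀ + (k₀ : ℤ) - (k : ℤ)),
    ∑ l ∈ Finset.Icc n (n₀ + (k₀ : ℤ) - (k : ℤ)), a k n * b k l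

/-- The diagonal functional `D(k) = ∑_{n₀−k₀+k ≤ n ≤ n₀+k₀−k} a^k_n b^k_n`. -/
def Dfun (a b : ℕ → ℤ → ℝ) (n₀ : ℤ) (k₀ k : ℕ) : ℝ :=
  ∑ n ∈ Finset.Icc (n₀ - (k₀ : ℤ) + (k : ℤ)) (n₀ + (k₀ : ℤ) - (k : ℤ)), a k n * b k n

/-- The linear functional `L(k) = ∑_{n₀−k₀+k ≤ n ≤ n₀+k₀−k} a^k_n`. -/
def Lfun (a : ℕ → ℤ → ℝ) (n₀ : ℤ) (k₀ k : ℕ) : ℝ :=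
  ∑ n ∈ Finset.Icc (n₀ - (k₀ : ℤ) + (k : ℤ)) (n₀ + (k₀ : ℤ) - (k : ℤ)), a k n

/-- Glimm-type interaction estimate for doubly-indexed nonnegative families:
`a` propagates to the right and `b` propagates to the left. -/
theorem stmt11 (a b c d : ℕ → ℤ → ℝ)
    (ha : ∀ (k : ℕ) (n : ℤ), 0 ≤ a k n) (hb : ∀ (k : ℕ) (n : ℤ), 0 ≤ b k n)
    (hc : ∀ (k : ℕ) (n : ℤ), 0 ≤ c k n) (hd : ∀ (k : ℕ) (n : ℤ), 0 ≤ d k n)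
    (hstepa : ∀ (k : ℕ) (n : ℤ), a (k + 1) (n + 1) ≤ a k n + c k n)
    (hstepb : ∀ (k : ℕ) (n : ℤ), b (k + 1) (n - 1) ≤ b k n + d k n)
    (n₀ : ℤ) (k₀ : ℕ) :
    ∀ k : ℕ, 1 ≤ k → k ≤ k₀ →
      Qfun a b n₀ k₀ k - Qfun a b n₀ k₀ (k - 1) + Dfun a b n₀ k₀ (k - 1)
        ≤ Lfun a n₀ k₀ (k - 1) * Lfun d n₀ k₀ (k - 1)
          + Lfun b n₀ k₀ (k - 1) * Lfun c n₀ k₀ (k - 1)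
          + Lfun c n₀ k₀ (k - 1) * Lfun d n₀ k₀ (k - 1) := by
  intro k hk1 hk0
  obtain ⟨j, rfl⟩ : ∃ j, k = j + 1 := ⟨k - 1, by omega⟩
  simp only [Nat.add_sub_cancel]
  set A : ℤ := n₀ - (k₀ : ℤ) + (j : ℤ) with hA
  set B : ℤ := n₀ + (k₀ : ℤ) - (j : ℤ) with hB
  have hQj : Qfun a b n₀ k₀ j = ∑ m ∈ Finset.Icc A B, ∑ p ∈ Finset.Icc m B, a j m * b j p := rfl
  have hDj : Dfun a b n₀ k₀ j = ∑ m ∈ Finset.Icc A B, a j m * b j m := rfl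
  have hLa : Lfun a n₀ k₀ j = ∑ m ∈ Finset.Icc A B, a j m := rfl
  have hLb : Lfun b n₀ k₀ j = ∑ m ∈ Finset.Icc A B, b j m := rfl
  have hLc : Lfun c n₀ k₀ j = ∑ m ∈ Finset.Icc A B, c j m := rfl
  have hLd : Lfun d n₀ k₀ j = ∑ m ∈ Finset.Icc A B, d j m := rfl
  have e1 : n₀ - (k₀ : ℤ) + ((j + 1 : ℕ) : ℤ) = A + 1 := by rw [hA]; push_cast; ring
  have e2 : n₀ + (k₀ : ℤ) - ((j + 1 : ℕ) : ℤ) = B - 1 := by rw [hB]; push_cast; ring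
  -- Step 1: termwise bound
  have h1 : Qfun a b n₀ k₀ (j + 1)
      ≤ ∑ n ∈ Finset.Icc (A + 1) (B - 1), ∑ l ∈ Finset.Icc n (B - 1),
          (a j (n - 1) + c j (n - 1)) * (b j (l + 1) + d j (l + 1)) := by
    rw [Qfun, e1, e2]
    refine Finset.sum_le_sum fun n _ => Finset.sum_le_sum fun l _ => ?_
    have han : a (j + 1) n ≤ a j (n - 1) + c j (n - 1) := by
      have := hstepa j (n - 1); simpa using this
    have hbl : b (j + 1) l ≤ b j (l + 1) + d j (l + 1) := by
      have := hstepb j (l + 1); simpa using this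
    exact mul_le_mul han hbl (hb _ _) (add_nonneg (ha _ _) (hc _ _))
  -- Step 2: reindex
  have h2 : ∑ n ∈ Finset.Icc (A + 1) (B - 1), ∑ l ∈ Finset.Icc n (B - 1),
          (a j (n - 1) + c j (n - 1)) * (b j (l + 1) + d j (l + 1))
      = ∑ m ∈ Finset.Icc A (B - 2), ∑ p ∈ Finset.Icc (m + 2) B,
          (a j m + c j m) * (b j p + d j p) := by
    have houter : Finset.Icc (A + 1) (B - 1) = (Finset.Icc A (B - 2)).map (addRightEmbedding 1) := by
      rw [Finset.map_add_right_Icc]; congr 1; ring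
    rw [houter, Finset.sum_map]
    refine Finset.sum_congr rfl fun m _ => ?_
    have hinner : Finset.Icc (addRightEmbedding (1:ℤ) m) (B - 1)
        = (Finset.Icc (m + 2) B).map (addRightEmbedding (-1)) := by
      rw [Finset.map_add_right_Icc, addRightEmbedding_apply]; congr 1 <;> ring
    rw [hinner, Finset.sum_map]
    refine Finset.sum_congr rfl fun p _ => ?_
    simp only [addRightEmbedding_apply]
    norm_num
  -- Step 3: enlarge outer range
  have h3 : ∑ m ∈ Finset.Icc A (B - 2), ∑ p ∈ Finset.Icc (m + 2) B,
          (a j m + c j m) * (b j p + d j p)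
      ≤ ∑ m ∈ Finset.Icc A B, ∑ p ∈ Finset.Icc (m + 2) B,
          (a j m + c j m) * (b j p + d j p) := by
    refine Finset.sum_le_sum_of_subset_of_nonneg
      (Finset.Icc_subset_Icc_right (by omega)) fun m _ _ => ?_
    exact Finset.sum_nonneg fun p _ =>
      mul_nonneg (add_nonneg (ha _ _) (hc _ _)) (add_nonneg (hb _ _) (hd _ _))
  -- Step 4: per-m bound
  have h4 : ∑ m ∈ Finset.Icc A B, ∑ p ∈ Finset.Icc (m + 2) B,
          (a j m + c j m) * (b j p + d j p)
      ≤ ∑ m ∈ Finset.Icc A B,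
          ((∑ p ∈ Finset.Icc m B, a j m * b j p) - a j m * b j m
            + a j m * Lfun d n₀ k₀ j + c j m * Lfun b n₀ k₀ j + c j m * Lfun d n₀ k₀ j) := by
    refine Finset.sum_le_sum fun m hm => ?_
    obtain ⟨hmA, hmB⟩ := Finset.mem_Icc.mp hm
    have expand : ∀ p ∈ Finset.Icc (m + 2) B, (a j m + c j m) * (b j p + d j p)
        = a j m * b j p + (a j m * d j p + (c j m * b j p + c j m * d j p)) :=
      fun p _ => by ring
    rw [Finset.sum_congr rfl expand, Finset.sum_add_distrib, Finset.sum_add_distrib,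
      Finset.sum_add_distrib]
    have t1 : ∑ p ∈ Finset.Icc (m + 2) B, a j m * b j p
        ≤ (∑ p ∈ Finset.Icc m B, a j m * b j p) - a j m * b j m := by
      rw [Finset.Icc_eq_cons_Ioc hmB, Finset.sum_cons, add_sub_cancel_left]
      refine Finset.sum_le_sum_of_subset_of_nonneg (fun p hp => ?_)
        (fun p _ _ => mul_nonneg (ha _ _) (hb _ _))
      obtain ⟨h1, h2⟩ := Finset.mem_Icc.mp hp
      exact Finset.mem_Ioc.mpr ⟨by omega, h2⟩
    have sub : Finset.Icc (m + 2) B ⊆ Finset.Icc A B := fun p hp => by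
      obtain ⟨h1, h2⟩ := Finset.mem_Icc.mp hp
      exact Finset.mem_Icc.mpr ⟨by omega, h2⟩
    have t2 : ∑ p ∈ Finset.Icc (m + 2) B, a j m * d j p ≤ a j m * Lfun d n₀ k₀ j := by
      rw [hLd, ← Finset.mul_sum]
      exact mul_le_mul_of_nonneg_left
        (Finset.sum_le_sum_of_subset_of_nonneg sub fun p _ _ => hd _ _) (ha _ _)
    have t3 : ∑ p ∈ Finset.Icc (m + 2) B, c j m * b j p ≤ c j m * Lfun b n₀ k₀ j := by
      rw [hLb, ← Finset.mul_sum]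
      exact mul_le_mul_of_nonneg_left
        (Finset.sum_le_sum_of_subset_of_nonneg sub fun p _ _ => hb _ _) (hc _ _)
    have t4 : ∑ p ∈ Finset.Icc (m + 2) B, c j m * d j p ≤ c j m * Lfun d n₀ k₀ j := by
      rw [hLd, ← Finset.mul_sum]
      exact mul_le_mul_of_nonneg_left
        (Finset.sum_le_sum_of_subset_of_nonneg sub fun p _ _ => hd _ _) (hc _ _)
    linarith
  -- Step 5: compute the RHS of h4
  have h5 : ∑ m ∈ Finset.Icc A B,
        ((∑ p ∈ Finset.Icc m B, a j m * b j p) - a j m * b j m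
          + a j m * Lfun d n₀ k₀ j + c j m * Lfun b n₀ k₀ j + c j m * Lfun d n₀ k₀ j)
      = Qfun a b n₀ k₀ j - Dfun a b n₀ k₀ j + Lfun a n₀ k₀ j * Lfun d n₀ k₀ j
        + Lfun c n₀ k₀ j * Lfun b n₀ k₀ j + Lfun c n₀ k₀ j * Lfun d n₀ k₀ j := by
    rw [hQj, hDj, hLa, hLc, Finset.sum_mul, Finset.sum_mul, Finset.sum_mul,
      ← Finset.sum_sub_distrib, ← Finset.sum_add_distrib, ← Finset.sum_add_distrib,
      ← Finset.sum_add_distrib]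
  have := h1.trans (h2 ▸ h3.trans (h4.trans_eq h5))
  linarith [this]

end
end
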